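/- (Mehler–Heine scaling asymptotics.) For every ψ ∈ ℝ, lim_{ℓ→∞} P_ℓ( cos(ψ/ℓ) ) = J₀(ψ), where J₀(ψ) := ∑_{k=0}^∞ (−1)^k (ψ/2)^{2k} / (k!)² is the Bessel function of the first kind of order zero, and P_ℓ is the ℓ-th Legendre polynomial. -/

import Mathlib

open MeasureTheory Real Filter
open scoped ENNReal NNReal

noncomputable section

/-- The ℓ-th Legendre polynomial, via Rodrigues' formula
`P_ℓ(t) = (1/(2^ℓ ℓ!)) (d/dt)^ℓ (t²−1)^ℓ`. -/
def legendreP (ℓ : ℕ) (t : ℝ) : ℝ :=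
  (1 / (2 ^ ℓ * (Nat.factorial ℓ : ℝ))) * iteratedDeriv ℓ (fun s => (s ^ 2 - 1) ^ ℓ) t

/-- The Bessel function of the first kind of order zero,
`J₀(ψ) = ∑_k (−1)^k (ψ/2)^{2k} / (k!)²`. -/
def besselJ0 (ψ : ℝ) : ℝ :=
  ∑' k : ℕ, (-1 : ℝ) ^ k * (ψ / 2) ^ (2 * k) / ((Nat.factorial k : ℝ) ^ 2)

/-!
Expanding Rodrigues' formula with the Leibniz rule gives
`P_ℓ(cos 2θ) = ∑_k (-1)^k (C(ℓ,k) sin^k θ cos^(ℓ-k) θ)²`. At `θ = ψ / (2ℓ)` the `k`-th term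
tends to `(-1)^k ((ψ/2)^k / k!)²`, because `C(ℓ,k) ~ ℓ^k / k!`, `ℓ sin (ψ / 2ℓ) → ψ / 2` and
`cos^(ℓ-k) (ψ / 2ℓ) → 1`; since `|sin y| ≤ |y|` and `C(ℓ,k) ≤ ℓ^k / k!`, it is also bounded by
`((ψ/2)^k / k!)²` uniformly in `ℓ`, so Tannery's theorem passes to the limit termwise.
-/

open Nat Topology Polynomial Finset

theorem iteratedDeriv_polynomial_eval {𝕜 : Type*} [NontriviallyNormedField 𝕜] (n : ℕ) (p : 𝕜[X]) :
    iteratedDeriv n (fun x => p.eval x) = fun x => (derivative^[n] p).eval x := by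
  induction n with
  | zero => simp
  | succ n ih =>
    ext x
    rw [iteratedDeriv_succ, ih, Function.iterate_succ_apply']
    exact Polynomial.deriv _

theorem Nat.choose_mul_descFactorial_mul_descFactorial {n k : ℕ} (hk : k ≤ n) :
    n.choose k * (n.descFactorial (n - k) * n.descFactorial k) = n.choose k ^ 2 * n ! := by
  rw [descFactorial_eq_factorial_mul_choose, descFactorial_eq_factorial_mul_choose,
    choose_symm hk, ← choose_mul_factorial_mul_factorial hk]
  ring

theorem iterate_derivative_sq_sub_one_pow (R : Type*) [CommRing R] (n : ℕ) :
    derivative^[n] (((X - C 1) * (X + C 1)) ^ n : R[X]) =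
      ∑ k ∈ range (n + 1), (n.choose k ^ 2 * n !) • ((X - C 1) ^ k * (X + C 1) ^ (n - k)) := by
  rw [mul_pow, iterate_derivative_mul]
  refine sum_congr rfl fun k hk => ?_
  have hkn : k ≤ n := Nat.lt_succ_iff.mp (mem_range.mp hk)
  rw [iterate_derivative_X_sub_pow, iterate_derivative_X_add_pow, Nat.sub_sub_self hkn,
    smul_mul_smul_comm, smul_smul, choose_mul_descFactorial_mul_descFactorial hkn]

theorem legendreP_eq_sum (ℓ : ℕ) (t : ℝ) :
    legendreP ℓ t = ∑ k ∈ range (ℓ + 1),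
      (ℓ.choose k : ℝ) ^ 2 * ((t - 1) / 2) ^ k * ((t + 1) / 2) ^ (ℓ - k) := by
  have hpoly : (fun s : ℝ => (s ^ 2 - 1) ^ ℓ) =
      fun s => (((X - C 1) * (X + C 1)) ^ ℓ : ℝ[X]).eval s := by
    ext s
    simp only [eval_pow, eval_mul, eval_sub, eval_add, eval_X, eval_C]
    ring
  rw [legendreP, hpoly, iteratedDeriv_polynomial_eval]
  dsimp only
  rw [iterate_derivative_sq_sub_one_pow, eval_finsetSum, mul_sum]
  refine sum_congr rfl fun k hk => ?_
  have hkn : k ≤ ℓ := Nat.lt_succ_iff.mp (mem_range.mp hk)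
  have h2 : (2 : ℝ) ^ ℓ = 2 ^ k * 2 ^ (ℓ - k) := by rw [← pow_add, Nat.add_sub_cancel' hkn]
  simp only [nsmul_eq_mul, eval_mul, eval_pow, eval_sub, eval_add, eval_X, eval_C, eval_natCast]
  rw [h2, div_pow, div_pow]
  push_cast
  field_simp

theorem legendreP_cos_two_mul (ℓ : ℕ) (θ : ℝ) :
    legendreP ℓ (cos (2 * θ)) =
      ∑' k : ℕ, (-1) ^ k * ((ℓ.choose k : ℝ) * sin θ ^ k * cos θ ^ (ℓ - k)) ^ 2 := by
  have hsin : (cos (2 * θ) - 1) / 2 = -sin θ ^ 2 := by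
    rw [cos_two_mul]
    linear_combination cos_sq_add_sin_sq θ
  have hcos : (cos (2 * θ) + 1) / 2 = cos θ ^ 2 := by rw [cos_two_mul]; ring
  rw [legendreP_eq_sum, hsin, hcos, tsum_eq_sum (s := range (ℓ + 1))]
  · refine sum_congr rfl fun k _ => ?_
    ring
  · intro k hk
    rw [choose_eq_zero_of_lt (by simpa using hk)]
    simp

theorem abs_cos_pow_le_one (x : ℝ) (m : ℕ) : |cos x ^ m| ≤ 1 := by
  rw [abs_pow]
  exact pow_le_one₀ (abs_nonneg _) (abs_cos_le_one _)

theorem tendsto_natCast_mul_sin_div (x : ℝ) :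
    Tendsto (fun n : ℕ => n * sin (x / n)) atTop (𝓝 x) := by
  have hsinc : Tendsto (fun n : ℕ => x * sinc (x / n)) atTop (𝓝 (x * sinc 0)) :=
    ((continuous_sinc.tendsto 0).comp (tendsto_const_div_atTop_nhds_zero_nat x)).const_mul x
  rw [sinc_zero, mul_one] at hsinc
  refine hsinc.congr' ?_
  filter_upwards [eventually_ne_atTop 0] with n hn
  rcases eq_or_ne x 0 with rfl | hx
  · simp
  · rw [sinc_of_ne_zero (by positivity)]
    field_simp

theorem tendsto_choose_mul_sin_div_pow (x : ℝ) (k : ℕ) :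
    Tendsto (fun n : ℕ => (n.choose k : ℝ) * sin (x / n) ^ k) atTop (𝓝 (x ^ k / k !)) := by
  have hpow : Tendsto (fun n : ℕ => (n ^ k / k ! : ℝ) * sin (x / n) ^ k) atTop
      (𝓝 (x ^ k / k !)) :=
    (((tendsto_natCast_mul_sin_div x).pow k).div_const _).congr fun n => by ring
  exact ((isEquivalent_choose k).mul Asymptotics.IsEquivalent.refl).symm.tendsto_nhds hpow

theorem tendsto_cos_div_pow_sub (x : ℝ) (k : ℕ) :
    Tendsto (fun n : ℕ => cos (x / n) ^ (n - k)) atTop (𝓝 1) := by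
  have hlower : Tendsto (fun n : ℕ => 1 - x ^ 2 / 2 / n) atTop (𝓝 1) := by
    simpa using (tendsto_const_div_atTop_nhds_zero_nat (x ^ 2 / 2)).const_sub (1 : ℝ)
  refine tendsto_of_tendsto_of_tendsto_of_le_of_le' hlower tendsto_const_nhds ?_
    (Eventually.of_forall fun n => (le_abs_self _).trans (abs_cos_pow_le_one _ _))
  filter_upwards [eventually_ne_atTop 0] with n hn
  have hcos : 0 ≤ 1 - cos (x / n) := by linarith [cos_le_one (x / n)]
  -- Bernoulli's inequality, with `1 - cos (x / n) ≤ (x / n) ^ 2 / 2`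
  calc 1 - x ^ 2 / 2 / n = 1 - n * ((x / n) ^ 2 / 2) := by field_simp
    _ ≤ 1 - (n - k : ℕ) * (1 - cos (x / n)) := by
      gcongr
      · exact_mod_cast Nat.sub_le n k
      · linarith [one_sub_sq_div_two_le_cos (x := x / n)]
    _ = 1 + (n - k : ℕ) * (cos (x / n) - 1) := by ring
    _ ≤ (1 + (cos (x / n) - 1)) ^ (n - k) :=
      one_add_mul_le_pow (by linarith [neg_one_le_cos (x / n)]) _
    _ = cos (x / n) ^ (n - k) := by ring

theorem abs_choose_mul_sin_div_pow_le (x : ℝ) (n k : ℕ) :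
    |(n.choose k : ℝ) * sin (x / n) ^ k| ≤ |x| ^ k / k ! := by
  rcases eq_or_ne n 0 with rfl | hn
  · rcases k with _ | k
    · simp
    · simp only [Nat.choose_zero_succ, Nat.cast_zero, zero_mul, abs_zero]
      positivity
  calc |(n.choose k : ℝ) * sin (x / n) ^ k| = n.choose k * |sin (x / n)| ^ k := by
        rw [abs_mul, abs_pow, Nat.abs_cast]
    _ ≤ (n ^ k / k !) * |x / n| ^ k := by
        gcongr ?_ * ?_ ^ k
        · exact choose_le_pow_div k n
        · exact abs_sin_le_abs
    _ = |x| ^ k / k ! := by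
        rw [abs_div, Nat.abs_cast, div_pow]
        field_simp

theorem sq_choose_mul_sin_div_pow_mul_cos_pow_le (x : ℝ) (n k m : ℕ) :
    ((n.choose k : ℝ) * sin (x / n) ^ k * cos (x / n) ^ m) ^ 2 ≤ (x ^ k / k !) ^ 2 := by
  rw [← sq_abs, ← sq_abs (x ^ k / k !), abs_div, abs_pow, Nat.abs_cast]
  gcongr
  rw [abs_mul]
  exact (mul_le_of_le_one_right (abs_nonneg _) (abs_cos_pow_le_one _ _)).trans
    (abs_choose_mul_sin_div_pow_le x n k)

theorem summable_sq_pow_div_factorial (x : ℝ) :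
    Summable (fun k : ℕ => (x ^ k / k !) ^ 2) := by
  refine (summable_pow_div_factorial (x ^ 2)).of_nonneg_of_le (fun k => sq_nonneg _) fun k => ?_
  have hfact : (1 : ℝ) ≤ k ! := mod_cast k.factorial_pos
  rw [div_pow, ← pow_mul, mul_comm k 2, pow_mul]
  gcongr
  nlinarith

/-- Mehler–Heine asymptotics: `P_ℓ(cos(ψ/ℓ)) → J₀(ψ)` as `ℓ → ∞`. -/
theorem mehler_heine (ψ : ℝ) :
    Tendsto (fun ℓ : ℕ => legendreP ℓ (Real.cos (ψ / (ℓ : ℝ)))) atTop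
      (nhds (besselJ0 ψ)) := by
  have hP : ∀ ℓ : ℕ, legendreP ℓ (cos (ψ / ℓ)) = ∑' k : ℕ,
      (-1) ^ k * ((ℓ.choose k : ℝ) * sin (ψ / 2 / ℓ) ^ k * cos (ψ / 2 / ℓ) ^ (ℓ - k)) ^ 2 := by
    intro ℓ
    rw [← legendreP_cos_two_mul]
    ring_nf
  have hJ : besselJ0 ψ = ∑' k : ℕ, (-1) ^ k * ((ψ / 2) ^ k / k !) ^ 2 :=
    tsum_congr fun k => by ring
  simp_rw [hP, hJ]
  refine tendsto_tsum_of_dominated_convergence (summable_sq_pow_div_factorial (ψ / 2))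
    (fun k => by simpa using (((tendsto_choose_mul_sin_div_pow _ k).mul
      (tendsto_cos_div_pow_sub _ k)).pow 2).const_mul ((-1) ^ k))
    (Eventually.of_forall fun ℓ k => ?_)
  rw [norm_mul, norm_pow, norm_neg, norm_one, one_pow, one_mul,
    Real.norm_of_nonneg (sq_nonneg _)]
  exact sq_choose_mul_sin_div_pow_mul_cos_pow_le _ ℓ k (ℓ - k)
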